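/- Let μ, σ̄, R > 0. For every integer k ≥ 2, h_k(R) + j_k(R) > 0 and Λ_k(γ) = (μσ̄/R)·(h_k(R) + j_k(R))·(γ − γ_k(R)) for all γ; consequently, if γ > γ*(R) := sup{γ_k(R) : k ≥ 2}, then Λ_k(γ) > 0 for every integer k ≥ 2. -/

import Mathlib

/-- The modified Bessel function of the first kind of order `m`:
`I_m(r) = ∑ (r/2)^(m+2n) / (n! Γ(m+n+1))`. -/
noncomputable def besselI (m r : ℝ) : ℝ :=
  ∑' n : ℕ, (r / 2) ^ (m + 2 * (n : ℝ)) / ((n.factorial : ℝ) * Real.Gamma (m + (n : ℝ) + 1))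

/-- `h_k(R) = ((k²+k)/2 - 1)·I_{k+3/2}(R)/(R·I_{k+1/2}(R))`. -/
noncomputable def hfun (k : ℕ) (R : ℝ) : ℝ :=
  (((k : ℝ) ^ 2 + k) / 2 - 1) * (besselI ((k : ℝ) + 3 / 2) R / (R * besselI ((k : ℝ) + 1 / 2) R))

/-- `j_k(R) = 1 - 3 I_{3/2}(R)/(R I_{1/2}(R)) - I_{3/2}(R) I_{k+3/2}(R)/(I_{1/2}(R) I_{k+1/2}(R))`. -/
noncomputable def jfun (k : ℕ) (R : ℝ) : ℝ :=
  1 - 3 * besselI (3 / 2) R / (R * besselI (1 / 2) R)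
    - besselI (3 / 2) R * besselI ((k : ℝ) + 3 / 2) R
      / (besselI (1 / 2) R * besselI ((k : ℝ) + 1 / 2) R)

/-- `γ_k(R) = j_k(R)·R/(h_k(R) + j_k(R))`. -/
noncomputable def gammafun (k : ℕ) (R : ℝ) : ℝ :=
  jfun k R * R / (hfun k R + jfun k R)

/-- The eigenvalue `Λ_k(γ) = (μσ̄/R)·[γ·(h_k(R)+j_k(R)) - j_k(R)·R]`. -/
noncomputable def Lam (μ σb R γ : ℝ) (k : ℕ) : ℝ :=
  (μ * σb / R) * (γ * (hfun k R + jfun k R) - jfun k R * R)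

/-! Put `t = I_{3/2}(R)/I_{1/2}(R)`, `s = I_{k+3/2}(R)/I_{k+1/2}(R)` and `A = (k²+k)/2 - 1 ≥ 2`.
Then `R (h_k + j_k) = (R - 3t) + s (A - tR)` is affine in `s ∈ [0, 1]`, so it is positive as soon as
`3t < R` and `t (R + 3) < R + 2`. Comparing the power series of `I_{m+1}` and `I_m` term by term
gives `s < 1` and `I_{m+1} < R/(2(m+1)) I_m`, hence `3t < R`. The second bound needs the closed
forms `I_{1/2} ∝ sinh R / R` and `I_{3/2} ∝ (cosh R - sinh R / R) / R`, which reduce it to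
`3 e^{2R} > 2R² + 6R + 3`. Finally `Λ_k` is affine in `γ` with positive slope and root `γ_k`, and
`γ_k ≤ R` because `h_k ≥ 0`, so the supremum `γ*` is finite and bounds every `γ_k`. -/

open Real Filter
open scoped Nat

noncomputable def besselTerm (m r : ℝ) (n : ℕ) : ℝ :=
  (r / 2) ^ (m + 2 * (n : ℝ)) / ((n ! : ℝ) * Gamma (m + n + 1))

section BesselSeries

variable {m r : ℝ}

lemma besselI_eq_tsum (m r : ℝ) : besselI m r = ∑' n, besselTerm m r n := rfl

lemma add_natCast_add_one_pos (hm : -1 < m) (n : ℕ) : 0 < m + n + 1 := by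
  linarith [n.cast_nonneg (α := ℝ)]

lemma besselTerm_pos (hm : -1 < m) (hr : 0 < r) (n : ℕ) : 0 < besselTerm m r n := by
  have : 0 < Gamma (m + n + 1) := Gamma_pos_of_pos (add_natCast_add_one_pos hm n)
  unfold besselTerm
  positivity

lemma besselTerm_eq_mul_pow (hr : 0 < r) (n : ℕ) :
    besselTerm m r n = (r / 2) ^ m * (r / 2) ^ (2 * n) / ((n ! : ℝ) * Gamma (m + n + 1)) := by
  rw [besselTerm, rpow_add (by positivity), ← rpow_natCast]
  push_cast
  rfl

lemma besselTerm_add_one (hm : -1 < m) (hr : 0 < r) (n : ℕ) :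
    besselTerm (m + 1) r n = r / 2 / (m + n + 1) * besselTerm m r n := by
  have hpos := add_natCast_add_one_pos hm n
  have : 0 < Gamma (m + n + 1) := Gamma_pos_of_pos hpos
  rw [besselTerm_eq_mul_pow hr, besselTerm_eq_mul_pow hr, rpow_add (by positivity), rpow_one,
    show m + 1 + n + 1 = (m + n + 1) + 1 by ring, Gamma_add_one hpos.ne']
  field_simp

lemma besselTerm_succ (hm : -1 < m) (hr : 0 < r) (n : ℕ) :
    besselTerm m r (n + 1) = (r / 2) ^ 2 / ((n + 1) * (m + n + 1)) * besselTerm m r n := by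
  have hpos := add_natCast_add_one_pos hm n
  have : 0 < Gamma (m + n + 1) := Gamma_pos_of_pos hpos
  rw [besselTerm_eq_mul_pow hr, besselTerm_eq_mul_pow hr, Nat.factorial_succ,
    show m + ↑(n + 1) + 1 = (m + n + 1) + 1 by push_cast; ring, Gamma_add_one hpos.ne']
  push_cast
  field_simp
  ring

lemma summable_besselTerm (hm : -1 < m) (hr : 0 < r) : Summable (besselTerm m r) := by
  refine summable_of_ratio_norm_eventually_le (r := 1 / 2) (by norm_num) ?_
  obtain ⟨N, hN⟩ := exists_nat_gt r
  filter_upwards [eventually_ge_atTop N] with n hn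
  have hn : r ≤ n := hN.le.trans (by exact_mod_cast hn)
  rw [norm_of_nonneg (besselTerm_pos hm hr _).le, norm_of_nonneg (besselTerm_pos hm hr _).le,
    besselTerm_succ hm hr]
  refine mul_le_mul_of_nonneg_right ?_ (besselTerm_pos hm hr n).le
  rw [div_le_iff₀ (mul_pos (by positivity) (add_natCast_add_one_pos hm n))]
  nlinarith

lemma besselI_pos (hm : -1 < m) (hr : 0 < r) : 0 < besselI m r :=
  (summable_besselTerm hm hr).tsum_pos (fun n => (besselTerm_pos hm hr n).le) 0
    (besselTerm_pos hm hr 0)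

lemma besselI_add_one_lt_mul (hm : -1 < m) (hr : 0 < r) :
    besselI (m + 1) r < r / (2 * (m + 1)) * besselI m r := by
  rw [besselI_eq_tsum, besselI_eq_tsum, ← tsum_mul_left]
  have hm1 : 0 < m + 1 := by linarith
  refine (summable_besselTerm (by linarith) hr).tsum_lt_tsum (i := 1) (fun n => ?_) ?_
    ((summable_besselTerm hm hr).mul_left _)
  · rw [besselTerm_add_one hm hr, ← div_div]
    refine mul_le_mul_of_nonneg_right ?_ (besselTerm_pos hm hr n).le
    gcongr
    linarith [n.cast_nonneg (α := ℝ)]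
  · rw [besselTerm_add_one hm hr, ← div_div]
    refine mul_lt_mul_of_pos_right ?_ (besselTerm_pos hm hr 1)
    gcongr
    norm_num

lemma besselI_add_one_lt (hm : 0 ≤ m) (hr : 0 < r) : besselI (m + 1) r < besselI m r := by
  have hm' : -1 < m := by linarith
  have hs := summable_besselTerm hm' hr
  have hs1 : Summable fun n => besselTerm m r (n + 1) := (summable_nat_add_iff 1).mpr hs
  -- summed, these termwise bounds give `2 I_{m+1} ≤ 2 I_m - besselTerm m r 0`
  have hterm (n : ℕ) :
      2 * besselTerm (m + 1) r n ≤ besselTerm m r n + besselTerm m r (n + 1) := by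
    rw [besselTerm_add_one hm' hr, besselTerm_succ hm' hr, ← sub_nonneg]
    have h0 := besselTerm_pos hm' hr n
    have h1 : (0 : ℝ) < n + 1 := by positivity
    have h2 := add_natCast_add_one_pos hm' n
    have : besselTerm m r n + (r / 2) ^ 2 / ((n + 1) * (m + n + 1)) * besselTerm m r n
        - 2 * (r / 2 / (m + n + 1) * besselTerm m r n)
        = ((n + 1 - r / 2) ^ 2 + (n + 1) * m) / ((n + 1) * (m + n + 1)) * besselTerm m r n := by
      field_simp
      ring
    rw [this]
    positivity
  have hle : 2 * besselI (m + 1) r ≤ besselI m r + ∑' n, besselTerm m r (n + 1) := by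
    rw [besselI_eq_tsum, besselI_eq_tsum, ← tsum_mul_left, ← hs.tsum_add hs1]
    exact (summable_besselTerm (by linarith) hr).mul_left 2 |>.tsum_le_tsum hterm (hs.add hs1)
  have htail : besselI m r = besselTerm m r 0 + ∑' n, besselTerm m r (n + 1) :=
    hs.tsum_eq_zero_add
  linarith [besselTerm_pos hm' hr 0]

end BesselSeries

lemma factorial_mul_Gamma_nat_add_three_halves (n : ℕ) :
    (n ! : ℝ) * Gamma (n + 1 + 1 / 2) = (2 * n + 1)! * √π / 2 ^ (2 * n + 1) := by
  rw [Gamma_nat_add_one_add_half, Nat.factorial_eq_mul_doubleFactorial,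
    Nat.doubleFactorial_two_mul]
  push_cast
  field_simp
  ring

section HalfOrder

variable {r : ℝ}

lemma besselTerm_one_half (hr : 0 < r) (n : ℕ) :
    besselTerm (1 / 2) r n =
      (r / 2) ^ (1 / 2 : ℝ) * (2 / √π) / r * (r ^ (2 * n + 1) / (2 * n + 1)!) := by
  have := factorial_mul_Gamma_nat_add_three_halves n
  rw [besselTerm_eq_mul_pow hr, show (1 / 2 : ℝ) + n + 1 = n + 1 + 1 / 2 by ring, this, div_pow]
  have : 0 < √π := sqrt_pos.mpr pi_pos
  field_simp
  ring

lemma besselI_one_half (hr : 0 < r) :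
    besselI (1 / 2) r = (r / 2) ^ (1 / 2 : ℝ) * (2 / √π) * (sinh r / r) := by
  have hsum := (hasSum_sinh r).mul_left ((r / 2) ^ (1 / 2 : ℝ) * (2 / √π) / r)
  rw [← funext (besselTerm_one_half hr)] at hsum
  rw [besselI_eq_tsum, hsum.tsum_eq]
  ring

lemma hasSum_cosh_sub_sinh_div (hr : r ≠ 0) :
    HasSum (fun n : ℕ => r ^ (2 * n) / (2 * n)! - r ^ (2 * n) / (2 * n + 1)!)
      (cosh r - sinh r / r) := by
  have h : (fun n : ℕ => r ^ (2 * n + 1) / (2 * n + 1)! / r)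
      = fun n : ℕ => r ^ (2 * n) / (2 * n + 1)! := by
    ext n
    rw [pow_succ]
    field_simp
  exact (hasSum_cosh r).sub (h ▸ (hasSum_sinh r).div_const r)

lemma besselI_three_halves (hr : 0 < r) :
    besselI (3 / 2) r = (r / 2) ^ (1 / 2 : ℝ) * (2 / √π) * ((cosh r - sinh r / r) / r) := by
  have hsum := ((hasSum_nat_add_iff' 1).mpr (hasSum_cosh_sub_sinh_div hr.ne')).mul_left
    ((r / 2) ^ (1 / 2 : ℝ) * (2 / √π) / r)
  have hterm (n : ℕ) : besselTerm (3 / 2) r n = (r / 2) ^ (1 / 2 : ℝ) * (2 / √π) / r *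
      (r ^ (2 * (n + 1)) / (2 * (n + 1))! - r ^ (2 * (n + 1)) / (2 * (n + 1) + 1)!) := by
    rw [show (3 / 2 : ℝ) = 1 / 2 + 1 by norm_num, besselTerm_add_one (by norm_num) hr,
      besselTerm_one_half hr, show 2 * (n + 1) = 2 * n + 1 + 1 by ring]
    have : 0 < √π := sqrt_pos.mpr pi_pos
    push_cast [Nat.factorial_succ]
    field_simp
    ring
  simp only [Finset.range_one, Finset.sum_singleton, mul_zero, pow_zero, Nat.factorial_zero,
    Nat.cast_one, zero_add, Nat.factorial_one, sub_self, sub_zero] at hsum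
  rw [besselI_eq_tsum, funext hterm, hsum.tsum_eq]
  ring

end HalfOrder

noncomputable def besselRatio (m r : ℝ) : ℝ := besselI (m + 1) r / besselI m r

section Ratio

variable {m r : ℝ}

lemma besselRatio_nonneg (hm : -1 < m) (hr : 0 < r) : 0 ≤ besselRatio m r :=
  div_nonneg (besselI_pos (by linarith) hr).le (besselI_pos hm hr).le

lemma besselRatio_lt_one (hm : 0 ≤ m) (hr : 0 < r) : besselRatio m r < 1 :=
  (div_lt_one (besselI_pos (by linarith) hr)).mpr (besselI_add_one_lt hm hr)

lemma besselRatio_lt (hm : -1 < m) (hr : 0 < r) : besselRatio m r < r / (2 * (m + 1)) :=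
  (div_lt_iff₀ (besselI_pos hm hr)).mpr (besselI_add_one_lt_mul hm hr)

lemma besselRatio_one_half (hr : 0 < r) : besselRatio (1 / 2) r = cosh r / sinh r - 1 / r := by
  have hC : 0 < (r / 2) ^ (1 / 2 : ℝ) * (2 / √π) := by
    have : 0 < √π := sqrt_pos.mpr pi_pos
    positivity
  have : 0 < sinh r := sinh_pos_iff.mpr hr
  rw [besselRatio, show (1 / 2 : ℝ) + 1 = 3 / 2 by norm_num, besselI_three_halves hr,
    besselI_one_half hr]
  field_simp

lemma mul_cosh_lt_mul_sinh (hr : 0 < r) :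
    r * (r + 3) * cosh r < (r ^ 2 + 3 * r + 3) * sinh r := by
  have hE : 0 < exp r := exp_pos r
  have hquad : 1 + 2 * r + 2 * r ^ 2 ≤ exp r ^ 2 := by
    rw [← exp_nat_mul]
    push_cast
    linarith [quadratic_le_exp_of_nonneg (by linarith : 0 ≤ 2 * r)]
  rw [cosh_eq, sinh_eq, exp_neg, ← sub_pos]
  have : (r ^ 2 + 3 * r + 3) * ((exp r - (exp r)⁻¹) / 2) - r * (r + 3) * ((exp r + (exp r)⁻¹) / 2)
      = (3 * exp r ^ 2 - (2 * r ^ 2 + 6 * r + 3)) / (2 * exp r) := by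
    field_simp
    ring
  rw [this]
  apply div_pos _ (by positivity)
  nlinarith

lemma besselRatio_one_half_mul_lt (hr : 0 < r) : besselRatio (1 / 2) r * (r + 3) < r + 2 := by
  have : 0 < sinh r := sinh_pos_iff.mpr hr
  rw [besselRatio_one_half hr, ← sub_pos]
  have : r + 2 - (cosh r / sinh r - 1 / r) * (r + 3)
      = ((r ^ 2 + 3 * r + 3) * sinh r - r * (r + 3) * cosh r) / (r * sinh r) := by
    field_simp
    ring
  rw [this]
  exact div_pos (sub_pos.mpr (mul_cosh_lt_mul_sinh hr)) (by positivity)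

end Ratio

section Eigenvalue

variable {k : ℕ} {r : ℝ}

lemma hfun_eq (k : ℕ) (r : ℝ) :
    hfun k r = (((k : ℝ) ^ 2 + k) / 2 - 1) * besselRatio (k + 1 / 2) r / r := by
  rw [hfun, besselRatio, show (k : ℝ) + 1 / 2 + 1 = k + 3 / 2 by ring]
  ring

lemma jfun_eq (k : ℕ) (r : ℝ) :
    jfun k r = 1 - 3 * besselRatio (1 / 2) r / r
      - besselRatio (1 / 2) r * besselRatio (k + 1 / 2) r := by
  rw [jfun, besselRatio, besselRatio, show (k : ℝ) + 1 / 2 + 1 = k + 3 / 2 by ring,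
    show (1 / 2 : ℝ) + 1 = 3 / 2 by norm_num]
  ring

lemma hfun_nonneg (hk : 1 ≤ k) (hr : 0 < r) : 0 ≤ hfun k r := by
  have hk' : (1 : ℝ) ≤ k := by exact_mod_cast hk
  have hA : 0 ≤ ((k : ℝ) ^ 2 + k) / 2 - 1 := by nlinarith
  have := besselRatio_nonneg (m := k + 1 / 2) (by linarith) hr
  rw [hfun_eq]
  positivity

lemma hfun_add_jfun_pos (hk : 2 ≤ k) (hr : 0 < r) : 0 < hfun k r + jfun k r := by
  have hk' : (2 : ℝ) ≤ k := by exact_mod_cast hk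
  have hA : 2 ≤ ((k : ℝ) ^ 2 + k) / 2 - 1 := by nlinarith
  have hs0 := besselRatio_nonneg (m := k + 1 / 2) (by linarith) hr
  have hs1 := (besselRatio_lt_one (m := k + 1 / 2) (by linarith) hr).le
  have ht3 : 3 * besselRatio (1 / 2) r < r := by
    have := besselRatio_lt (m := 1 / 2) (by norm_num) hr
    norm_num at this
    linarith
  have htr := besselRatio_one_half_mul_lt hr
  rw [hfun_eq, jfun_eq]
  generalize ((k : ℝ) ^ 2 + k) / 2 - 1 = A at *
  generalize besselRatio (k + 1 / 2) r = s at *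
  generalize besselRatio (1 / 2) r = t at *
  have heq : A * s / r + (1 - 3 * t / r - t * s) = (r - 3 * t + s * (A - t * r)) / r := by
    field_simp
    ring
  rw [heq]
  refine div_pos ?_ hr
  rcases le_or_gt (t * r) A with hc | hc
  · nlinarith [mul_nonneg hs0 (sub_nonneg.mpr hc)]
  · nlinarith [mul_nonneg (sub_nonneg.mpr hs1) (sub_pos.mpr hc).le]

lemma gammafun_le (hk : 2 ≤ k) (hr : 0 < r) : gammafun k r ≤ r := by
  rw [gammafun, div_le_iff₀ (hfun_add_jfun_pos hk hr)]
  nlinarith [hfun_nonneg (by omega : 1 ≤ k) hr]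

lemma Lam_eq_mul_sub_gammafun (μ σb γ : ℝ) (h : hfun k r + jfun k r ≠ 0) :
    Lam μ σb r γ k = μ * σb / r * (hfun k r + jfun k r) * (γ - gammafun k r) := by
  rw [Lam, gammafun]
  field_simp

end Eigenvalue

/-- For `k ≥ 2`, `h_k + j_k > 0` and `Λ_k(γ) = (μσ̄/R)(h_k+j_k)(γ - γ_k)`;
hence `Λ_k(γ) > 0` for all `k ≥ 2` whenever `γ > γ* = sup{γ_k : k ≥ 2}`. -/
theorem stmt11 (μ σb R : ℝ) (hμ : 0 < μ) (hσb : 0 < σb) (hR : 0 < R) :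
    (∀ k : ℕ, 2 ≤ k →
      0 < hfun k R + jfun k R ∧
      ∀ γ : ℝ, Lam μ σb R γ k = (μ * σb / R) * (hfun k R + jfun k R) * (γ - gammafun k R)) ∧
    ∀ γ : ℝ, γ > sSup {x : ℝ | ∃ k : ℕ, 2 ≤ k ∧ x = gammafun k R} →
      ∀ k : ℕ, 2 ≤ k → 0 < Lam μ σb R γ k := by
  refine ⟨fun k hk => ⟨hfun_add_jfun_pos hk hR, fun γ =>
    Lam_eq_mul_sub_gammafun μ σb γ (hfun_add_jfun_pos hk hR).ne'⟩, fun γ hγ k hk => ?_⟩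
  have hbdd : BddAbove {x : ℝ | ∃ k : ℕ, 2 ≤ k ∧ x = gammafun k R} := by
    refine ⟨R, ?_⟩
    rintro _ ⟨k, hk, rfl⟩
    exact gammafun_le hk hR
  have hγk : gammafun k R < γ := (le_csSup hbdd ⟨k, hk, rfl⟩).trans_lt hγ
  rw [Lam_eq_mul_sub_gammafun μ σb γ (hfun_add_jfun_pos hk hR).ne']
  have := hfun_add_jfun_pos hk hR
  have : 0 < γ - gammafun k R := sub_pos.mpr hγk
  positivity
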